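/- arXiv:2101.00725 — 3 statements merged into one kernel-verified Lean document; each statement's English description precedes it below -/
import Mathlib

section
/- Let $d\in\mathbb N$, let $K_i=[x_i-h/2,x_i+h/2]$ be a cell of a uniform mesh of size $h>0$, let $S_i$ be a stencil consisting of $n_i>d$ cells of the mesh distinct from $K_i$ (all cells having pairwise disjoint interiors), and let $(\phi_j)_{j\in S_i}$ be given real data. For $R=(R_1,\dots,R_d)\in\mathbb R^d$ define $p_R(x)=\phi_i+\sum_{k=1}^d R_k((x-x_i)^k-X_{i,k})$ with $X_{i,k}=\frac1h\int_{K_i}(x-x_i)^k dx$, and the quadratic functional $E_i(R)=\sum_{j\in S_i}\big(\frac1h\int_{K_j}p_R(x)\,dx-\phi_j\big)^2$. Then $E_i$ admits a unique minimizer $\widehat R\in\mathbb R^d$. -/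
/-!
Write `p_R = φ_i + q_R`. The mean of `(x - x_i) ^ n` over the cell of width `h` centred at `y` is
a monic polynomial of degree `n` in `y - x_i` (`cellMeanPow`). Hence the cell means of `q_R` over
the stencil are the values at the `n_i > d` distinct stencil centres of a polynomial of degree
`≤ d` whose coefficients in the basis of these monic polynomials are `R` and a constant; if they
all vanish, the polynomial is zero and so is `R`. Thus `E_i(R) = ‖A R - b‖²` with `A` linear and
injective, and by Pythagoras the unique minimizer is the preimage under `A` of the orthogonal
projection of `b` onto the range of `A`.
-/

open Polynomial Finset Matrix

theorem existsUnique_forall_norm_sub_sq_le {V W : Type*} [AddCommGroup V] [Module ℝ V]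
    [FiniteDimensional ℝ V] [NormedAddCommGroup W] [InnerProductSpace ℝ W]
    {L : V →ₗ[ℝ] W} (hL : Function.Injective L) (v : W) :
    ∃! x, ∀ y, ‖L x - v‖ ^ 2 ≤ ‖L y - v‖ ^ 2 := by
  set K := LinearMap.range L
  obtain ⟨x₀, hx₀⟩ : K.starProjection v ∈ K := K.starProjection_apply_mem v
  have pythagoras : ∀ y, ‖L y - v‖ ^ 2 = ‖L y - L x₀‖ ^ 2 + ‖L x₀ - v‖ ^ 2 := by
    intro y
    have hperp : L x₀ - v ∈ Kᗮ := by
      rw [hx₀, ← neg_sub]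
      exact Kᗮ.neg_mem (K.sub_starProjection_mem_orthogonal v)
    have hin : L y - L x₀ ∈ K := K.sub_mem ⟨y, rfl⟩ ⟨x₀, rfl⟩
    simpa only [sq, sub_add_sub_cancel] using
      norm_add_sq_eq_norm_sq_add_norm_sq_real (K.inner_right_of_mem_orthogonal hin hperp)
  refine ⟨x₀, fun y => ?_, fun x hx => ?_⟩
  · rw [pythagoras y, pythagoras x₀, sub_self, norm_zero]
    nlinarith [sq_nonneg ‖L y - L x₀‖]
  · have hle := hx x₀
    rw [pythagoras x, pythagoras x₀, sub_self, norm_zero] at hle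
    have hdist : ‖L x - L x₀‖ = 0 := by nlinarith [norm_nonneg (L x - L x₀)]
    exact hL (sub_eq_zero.mp (norm_eq_zero.mp hdist))

theorem Matrix.existsUnique_forall_sum_sq_le {ι κ : Type*} [Fintype κ] (A : Matrix ι κ ℝ)
    (b : ι → ℝ) (S : Finset ι) (hA : ∀ R, (∀ j ∈ S, (A *ᵥ R) j = 0) → R = 0) :
    ∃! R : κ → ℝ, ∀ R', ∑ j ∈ S, ((A *ᵥ R) j - b j) ^ 2 ≤ ∑ j ∈ S, ((A *ᵥ R') j - b j) ^ 2 := by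
  let L : (κ → ℝ) →ₗ[ℝ] EuclideanSpace ℝ S :=
    (WithLp.linearEquiv 2 ℝ (S → ℝ)).symm.toLinearMap ∘ₗ (A.submatrix (↑) id).mulVecLin
  have hL : Function.Injective L := by
    rw [← LinearMap.ker_eq_bot, LinearMap.ker_eq_bot']
    intro R hR
    exact hA R fun j hj => congrFun (congrArg WithLp.ofLp hR) ⟨j, hj⟩
  have hnorm : ∀ R, ‖L R - WithLp.toLp 2 (fun j : S => b j)‖ ^ 2
      = ∑ j ∈ S, ((A *ᵥ R) j - b j) ^ 2 := by
    intro R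
    rw [EuclideanSpace.real_norm_sq_eq, ← Finset.sum_coe_sort S]
    rfl
  simpa only [hnorm] using existsUnique_forall_norm_sub_sq_le hL (WithLp.toLp 2 fun j : S => b j)

theorem Polynomial.Sequence.eq_zero_of_sum_eval_mul_eq_zero {R ι : Type*} [CommRing R]
    [IsDomain R] (P : Sequence R) {d : ℕ} (g : Fin (d + 1) → R) {S : Finset ι} {y : ι → R}
    (hy : Set.InjOn y S) (hd : d < #S)
    (hg : ∀ j ∈ S, ∑ n : Fin (d + 1), (P n).eval (y j) * g n = 0) :
    g = 0 := by
  classical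
  set G := ∑ n, C (g n) * P n
  have hdeg : G.natDegree ≤ d := by
    refine natDegree_sum_le_of_forall_le _ _ fun n _ => ?_
    grw [natDegree_C_mul_le, P.natDegree_eq]
    exact Nat.lt_succ_iff.mp n.isLt
  have hG : G = 0 := by
    refine eq_zero_of_natDegree_lt_card_of_eval_eq_zero' G (S.image y) ?_ ?_
    · simpa [G, eval_finsetSum, mul_comm] using hg
    · rw [card_image_of_injOn hy]; omega
  have hind := P.linearIndependent.comp (Fin.val : Fin (d + 1) → ℕ) Fin.val_injective
  funext n
  exact Fintype.linearIndependent_iff.mp hind g (by simpa [G, smul_eq_C_mul] using hG) n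

noncomputable def cellMeanPow (h : ℝ) (n : ℕ) : ℝ[X] :=
  C ((n + 1) * h)⁻¹ * ((X + C (h / 2)) ^ (n + 1) - (X + C (-(h / 2))) ^ (n + 1))

theorem mean_sub_pow_eq_eval_cellMeanPow {h : ℝ} (hh : h ≠ 0) (a y : ℝ) (n : ℕ) :
    (1 / h) * ∫ x in (y - h / 2)..(y + h / 2), (x - a) ^ n = (cellMeanPow h n).eval (y - a) := by
  rw [intervalIntegral.integral_comp_sub_right (fun x => x ^ n), integral_pow]
  simp only [cellMeanPow, eval_mul, eval_C, eval_sub, eval_pow, eval_add, eval_X]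
  field_simp
  ring

theorem cellMeanPow_zero {h : ℝ} (hh : h ≠ 0) : cellMeanPow h 0 = 1 := by
  rw [cellMeanPow, pow_one, pow_one, add_sub_add_left_eq_sub, ← C_sub, ← C_mul, ← C_1]
  congr 1
  field_simp
  ring

theorem degree_cellMeanPow {h : ℝ} (hh : h ≠ 0) (n : ℕ) : (cellMeanPow h n).degree = n := by
  have hcoeff : ∀ m, (cellMeanPow h n).coeff m = ((n + 1) * h)⁻¹ *
      (((h / 2) ^ (n + 1 - m) - (-(h / 2)) ^ (n + 1 - m)) * (n + 1).choose m) := by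
    intro m
    rw [cellMeanPow, coeff_C_mul, coeff_sub, coeff_X_add_C_pow, coeff_X_add_C_pow, sub_mul]
  apply degree_eq_of_le_of_coeff_ne_zero
  · rw [degree_le_iff_coeff_zero]
    intro m hm
    have hm : n + 1 ≤ m := by exact_mod_cast hm
    rw [hcoeff]
    rcases hm.eq_or_lt with rfl | hlt
    · simp
    · rw [Nat.choose_eq_zero_of_lt hlt]; simp
  · rw [hcoeff, Nat.sub_add_comm le_rfl, Nat.sub_self, Nat.choose_succ_self_right]
    push_cast
    field_simp
    norm_num

theorem eq_zero_of_forall_sum_cellMeanPow_sub_mul_eq_zero {h : ℝ} (hh : h ≠ 0) {d : ℕ}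
    (y₀ : ℝ) {ι : Type*} {S : Finset ι} {y : ι → ℝ} (hy : Set.InjOn y S) (hd : d < #S)
    (R : Fin d → ℝ)
    (hR : ∀ j ∈ S,
      ∑ k, ((cellMeanPow h (k.1 + 1)).eval (y j) - (cellMeanPow h (k.1 + 1)).eval y₀) * R k = 0) :
    R = 0 := by
  let P : Sequence ℝ := ⟨cellMeanPow h, degree_cellMeanPow hh⟩
  let g : Fin (d + 1) → ℝ := Fin.cons (-∑ k, (cellMeanPow h (k.1 + 1)).eval y₀ * R k) R
  have hg : g = 0 := by
    refine P.eq_zero_of_sum_eval_mul_eq_zero g hy hd fun j hj => ?_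
    rw [Fin.sum_univ_succ, ← hR j hj]
    simp only [g, P, Fin.cons_zero, Fin.cons_succ, Fin.val_zero, Fin.val_succ,
      cellMeanPow_zero hh, eval_one, one_mul, sub_mul, sum_sub_distrib]
    ring
  funext k
  simpa [g] using congrFun hg k.succ

theorem mean_const_add_sum_mul_sub_pow {h : ℝ} (hh : h ≠ 0) {d : ℕ} (a y φ₀ : ℝ)
    (R : Fin d → ℝ) (X : ℕ → ℝ) :
    (1 / h) * ∫ x in (y - h / 2)..(y + h / 2),
        φ₀ + ∑ k : Fin d, R k * ((x - a) ^ (k.1 + 1) - X (k.1 + 1))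
      = φ₀ + ∑ k : Fin d, ((cellMeanPow h (k.1 + 1)).eval (y - a) - X (k.1 + 1)) * R k := by
  have hcont : ∀ k : Fin d, Continuous fun x => R k * ((x - a) ^ (k.1 + 1) - X (k.1 + 1)) :=
    fun k => by fun_prop
  have hwidth : y + h / 2 - (y - h / 2) = h := by ring
  rw [intervalIntegral.integral_add intervalIntegrable_const
      ((continuous_finsetSum _ fun k _ => hcont k).intervalIntegrable _ _),
    intervalIntegral.integral_finsetSum fun k _ => (hcont k).intervalIntegrable _ _,
    intervalIntegral.integral_const, hwidth, smul_eq_mul, mul_add, mul_sum]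
  congr 1
  · field_simp
  refine sum_congr rfl fun k _ => ?_
  have hpow : Continuous fun x : ℝ => (x - a) ^ (k.1 + 1) := by fun_prop
  rw [intervalIntegral.integral_const_mul, intervalIntegral.integral_sub
      (hpow.intervalIntegrable _ _) intervalIntegrable_const, intervalIntegral.integral_const,
    hwidth, smul_eq_mul, ← mean_sub_pow_eq_eval_cellMeanPow hh]
  field_simp

theorem least_squares_unique_minimizer_general
    (d : ℕ) (h : ℝ) (hh : 0 < h) (c : ℤ → ℝ) (hc : ∀ j : ℤ, c j = c 0 + j * h)
    (i : ℤ) (S : Finset ℤ) (hcard : d < S.card)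
    (φi : ℝ) (φ : ℤ → ℝ) (X : ℕ → ℝ)
    (hX : ∀ k, X k = (1/h) * ∫ x in (c i - h/2)..(c i + h/2), (x - c i)^k)
    (p : (Fin d → ℝ) → ℝ → ℝ)
    (hp : ∀ R x, p R x = φi + ∑ k : Fin d, R k * ((x - c i)^(k.1+1) - X (k.1+1)))
    (E : (Fin d → ℝ) → ℝ)
    (hE : ∀ R, E R = ∑ j ∈ S, ((1/h) * (∫ x in (c j - h/2)..(c j + h/2), p R x) - φ j)^2) :
    ∃! R : Fin d → ℝ, ∀ R' : Fin d → ℝ, E R ≤ E R' := by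
  have hh' := hh.ne'
  have hX' : ∀ k, X k = (cellMeanPow h k).eval 0 := fun k => by
    rw [hX, mean_sub_pow_eq_eval_cellMeanPow hh', sub_self]
  let A : Matrix ℤ (Fin d) ℝ := Matrix.of fun j k =>
    (cellMeanPow h (k.1 + 1)).eval (c j - c i) - (cellMeanPow h (k.1 + 1)).eval 0
  have hE' : E = fun R => ∑ j ∈ S, ((A *ᵥ R) j - (φ j - φi)) ^ 2 := by
    funext R
    rw [hE]
    refine sum_congr rfl fun j _ => ?_
    simp only [hp, mean_const_add_sum_mul_sub_pow hh']
    simp only [A, mulVec, dotProduct, of_apply, hX']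
    ring
  have hcenters : Set.InjOn (fun j => c j - c i) S := fun j _ k _ hjk => by
    have hjk' : ((j : ℝ) - i) * h = ((k : ℝ) - i) * h := by
      simp only [hc j, hc k, hc i] at hjk ⊢; linarith
    exact_mod_cast sub_left_injective (mul_right_cancel₀ hh' hjk')
  rw [hE']
  exact A.existsUnique_forall_sum_sq_le _ S fun R hR =>
    eq_zero_of_forall_sum_cellMeanPow_sub_mul_eq_zero hh' 0 hcenters hcard R hR

/-- Existence and uniqueness of the minimizer of the least-squares
reconstruction functional on a uniform 1D mesh.  The mesh cells are
`K_j = [c j - h/2, c j + h/2]` with centers `c j = c 0 + j h` (hence with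
pairwise disjoint interiors); the stencil `S` consists of `n_i > d` cells
distinct from the reference cell `K_i`. -/
theorem least_squares_unique_minimizer
    (d : ℕ) (h : ℝ) (hh : 0 < h) (c : ℤ → ℝ) (hc : ∀ j : ℤ, c j = c 0 + j * h)
    (i : ℤ) (S : Finset ℤ) (hiS : i ∉ S) (hcard : d < S.card)
    (φi : ℝ) (φ : ℤ → ℝ) (X : ℕ → ℝ)
    (hX : ∀ k, X k = (1/h) * ∫ x in (c i - h/2)..(c i + h/2), (x - c i)^k)
    (p : (Fin d → ℝ) → ℝ → ℝ)
    (hp : ∀ R x, p R x = φi + ∑ k : Fin d, R k * ((x - c i)^(k.1+1) - X (k.1+1)))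
    (E : (Fin d → ℝ) → ℝ)
    (hE : ∀ R, E R = ∑ j ∈ S, ((1/h) * (∫ x in (c j - h/2)..(c j + h/2), p R x) - φ j)^2) :
    ∃! R : Fin d → ℝ, ∀ R' : Fin d → ℝ, E R ≤ E R' :=
  least_squares_unique_minimizer_general d h hh c hc i S hcard φi φ X hX p hp E hE
end

section
/- With the notation of the least-squares reconstruction (uniform mesh of size $h$, cell $K_i$ with center $x_i$, stencil $S_i$ of $n_i>d$ cells with pairwise disjoint interiors, ansatz $p_R(x)=\phi_i+\sum_{k=1}^d R_k((x-x_i)^k-X_{i,k})$, functional $E_i(R)=\sum_{j\in S_i}(\frac1h\int_{K_j}p_R-\phi_j)^2$): if there exists a polynomial $q$ of degree at most $d$ such that $\phi_i=\frac1h\int_{K_i}q(x)\,dx$ and $\phi_j=\frac1h\int_{K_j}q(x)\,dx$ for all $j\in S_i$, then the unique minimizer $\widehat R$ of $E_i$ satisfies $p_{\widehat R}=q$ and $E_i(\widehat R)=0$; in particular the least-squares reconstruction reproduces exactly all polynomials of degree at most $d$. -/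
open Function Polynomial Set intervalIntegral

/-! Expanding `q` in powers of `x - xᵢ` gives coefficients `R⋆` with `p_{R⋆} = q`: the constant
terms agree because both have mean `φᵢ` on `Kᵢ`. Hence `E R⋆ = 0`, so a minimizer has `E R̂ = 0`,
and `p_{R̂} - q` is a polynomial of degree `≤ d` with zero mean on more than `d` cells. A continuous
function with zero mean on an interval vanishes somewhere in its interior; as the interiors are
disjoint, `p_{R̂} - q` has more roots than its degree and is zero. -/

theorem exists_mem_Ioo_eq_zero_of_intervalIntegral_eq_zero {f : ℝ → ℝ} {a b : ℝ} (hab : a < b)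
    (hf : ContinuousOn f (Icc a b)) (h0 : ∫ x in a..b, f x = 0) : ∃ x ∈ Ioo a b, f x = 0 := by
  by_contra! hne
  have hfi : IntervalIntegrable f MeasureTheory.volume a b := hf.intervalIntegrable_of_Icc hab.le
  have hsign : (∀ x ∈ Ioo a b, 0 < f x) ∨ ∀ x ∈ Ioo a b, f x < 0 := by
    by_contra! ⟨⟨x, hx, hfx⟩, y, hy, hfy⟩
    obtain ⟨z, hz, hfz⟩ :=
      isPreconnected_Ioo.intermediate_value hx hy (hf.mono Ioo_subset_Icc_self) ⟨hfx, hfy⟩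
    exact hne z hz hfz
  rcases hsign with hpos | hneg
  · exact (intervalIntegral_pos_of_pos_on hfi hpos hab).ne' h0
  · have := intervalIntegral_pos_of_pos_on hfi.neg (fun x hx => neg_pos.mpr (hneg x hx)) hab
    simp [h0] at this

theorem Polynomial.eq_zero_of_intervalIntegral_eq_zero {ι : Type*} (S : Finset ι) (a b : ι → ℝ)
    (hab : ∀ j ∈ S, a j < b j) (hdisj : (S : Set ι).PairwiseDisjoint fun j => Ioo (a j) (b j))
    (f : ℝ[X]) (hdeg : f.natDegree < S.card) (h0 : ∀ j ∈ S, ∫ x in a j..b j, f.eval x = 0) :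
    f = 0 := by
  have hroot : ∀ j : S, ∃ x ∈ Ioo (a j) (b j), f.eval x = 0 := fun j =>
    exists_mem_Ioo_eq_zero_of_intervalIntegral_eq_zero (hab j j.2) f.continuous.continuousOn
      (h0 j j.2)
  choose x hx hfx using hroot
  refine eq_zero_of_natDegree_lt_card_of_eval_eq_zero f (fun j k hjk => ?_) hfx
    (by rwa [Fintype.card_coe])
  by_contra hne
  exact disjoint_left.mp (hdisj j.2 k.2 (Subtype.coe_ne_coe.mpr hne)) (hx j) (hjk ▸ hx k)

theorem pairwise_disjoint_Ioo_of_uniform_mesh {h : ℝ} (hh : 0 < h) {c : ℤ → ℝ}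
    (hc : ∀ j : ℤ, c j = c 0 + j * h) :
    Pairwise (Disjoint on (fun j => Ioo (c j - h / 2) (c j + h / 2))) := by
  intro j k hjk
  refine disjoint_left.mpr fun x hxj hxk => hjk ?_
  have hjk : ((j : ℝ) - k) * h < 1 * h := by linarith [hxj.1, hxk.2, hc j, hc k]
  have hkj : ((k : ℝ) - j) * h < 1 * h := by linarith [hxk.1, hxj.2, hc j, hc k]
  have h1 : (j : ℝ) - k < 1 := lt_of_mul_lt_mul_right hjk hh.le
  have h2 : (k : ℝ) - j < 1 := lt_of_mul_lt_mul_right hkj hh.le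
  norm_cast at h1 h2
  omega

theorem Polynomial.eval_eq_sum_range_taylor {R : Type*} [CommRing R] {q : R[X]} {n : ℕ}
    (hn : q.natDegree < n) (c x : R) :
    q.eval x = ∑ k ∈ Finset.range n, (taylor c q).coeff k * (x - c) ^ k := by
  rw [← eval_eq_sum_range' (by rwa [natDegree_taylor]), taylor_eval, sub_add_cancel]

theorem Polynomial.integral_eval_eq_sum_taylor {q : ℝ[X]} {n : ℕ} (hn : q.natDegree < n)
    (c a b : ℝ) :
    ∫ x in a..b, q.eval x =
      ∑ k ∈ Finset.range n, (taylor c q).coeff k * ∫ x in a..b, (x - c) ^ k := by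
  simp_rw [eval_eq_sum_range_taylor hn c]
  rw [integral_finsetSum fun k _ => (by fun_prop : Continuous _).intervalIntegrable _ _]
  simp_rw [integral_const_mul]

/-- The ansatz `p_R` centred at `c = xᵢ`, with `m k` in the role of `X_{i,k}`. -/
noncomputable def ansatzPoly (d : ℕ) (φ₀ c : ℝ) (m : ℕ → ℝ) (R : Fin d → ℝ) : ℝ[X] :=
  C φ₀ + ∑ k : Fin d, C (R k) * ((X - C c) ^ (k.1 + 1) - C (m (k.1 + 1)))

theorem eval_ansatzPoly (d : ℕ) (φ₀ c : ℝ) (m : ℕ → ℝ) (R : Fin d → ℝ) (x : ℝ) :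
    (ansatzPoly d φ₀ c m R).eval x =
      φ₀ + ∑ k : Fin d, R k * ((x - c) ^ (k.1 + 1) - m (k.1 + 1)) := by
  simp [ansatzPoly, eval_finsetSum]

theorem natDegree_ansatzPoly_le (d : ℕ) (φ₀ c : ℝ) (m : ℕ → ℝ) (R : Fin d → ℝ) :
    (ansatzPoly d φ₀ c m R).natDegree ≤ d := by
  refine natDegree_add_le_of_degree_le ((natDegree_C φ₀).trans_le d.zero_le)
    (natDegree_sum_le_of_forall_le _ _ fun k _ => (natDegree_C_mul_le _ _).trans ?_)
  refine (natDegree_sub_le _ _).trans (max_le ?_ ((natDegree_C _).trans_le d.zero_le))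
  rw [natDegree_pow, natDegree_X_sub_C]
  omega

theorem eval_ansatzPoly_taylor {d : ℕ} {q : ℝ[X]} (hq : q.natDegree ≤ d) (c : ℝ) {m : ℕ → ℝ}
    (hm : m 0 = 1) (x : ℝ) :
    (ansatzPoly d (∑ k ∈ Finset.range (d + 1), (taylor c q).coeff k * m k) c m
      fun k => (taylor c q).coeff (k.1 + 1)).eval x = q.eval x := by
  rw [eval_ansatzPoly, eval_eq_sum_range_taylor (Nat.lt_succ_of_le hq) c, Finset.sum_range_succ',
    Finset.sum_range_succ', Fin.sum_univ_eq_sum_range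
      (fun k => (taylor c q).coeff (k + 1) * ((x - c) ^ (k + 1) - m (k + 1))), hm]
  simp only [mul_sub, Finset.sum_sub_distrib, pow_zero]
  ring

theorem exists_eval_ansatzPoly_eq {d : ℕ} {q : ℝ[X]} (hq : q.natDegree ≤ d) {h : ℝ} (hh : h ≠ 0)
    (c : ℝ) :
    ∃ R, ∀ x, (ansatzPoly d ((1 / h) * ∫ x in (c - h / 2)..(c + h / 2), q.eval x) c
      (fun k => (1 / h) * ∫ x in (c - h / 2)..(c + h / 2), (x - c) ^ k) R).eval x = q.eval x := by
  have hm0 : (1 / h) * ∫ x in (c - h / 2)..(c + h / 2), (x - c) ^ 0 = 1 := by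
    simp only [pow_zero, integral_const, smul_eq_mul]
    field_simp
    ring
  have hmean : (1 / h) * ∫ x in (c - h / 2)..(c + h / 2), q.eval x =
      ∑ k ∈ Finset.range (d + 1),
        (taylor c q).coeff k * ((1 / h) * ∫ x in (c - h / 2)..(c + h / 2), (x - c) ^ k) := by
    rw [integral_eval_eq_sum_taylor (Nat.lt_succ_of_le hq) c, Finset.mul_sum]
    exact Finset.sum_congr rfl fun k _ => mul_left_comm _ _ _
  exact ⟨fun k => (taylor c q).coeff (k.1 + 1), fun x => by
    rw [hmean]
    exact eval_ansatzPoly_taylor hq c hm0 x⟩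

theorem least_squares_reproduces_polynomials_general
    (d : ℕ) (h : ℝ) (hh : 0 < h) (c : ℤ → ℝ) (hc : ∀ j : ℤ, c j = c 0 + j * h)
    (i : ℤ) (S : Finset ℤ) (hcard : d < S.card)
    (φi : ℝ) (φ : ℤ → ℝ) (X : ℕ → ℝ)
    (hX : ∀ k, X k = (1/h) * ∫ x in (c i - h/2)..(c i + h/2), (x - c i)^k)
    (p : (Fin d → ℝ) → ℝ → ℝ)
    (hp : ∀ R x, p R x = φi + ∑ k : Fin d, R k * ((x - c i)^(k.1+1) - X (k.1+1)))
    (E : (Fin d → ℝ) → ℝ)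
    (hE : ∀ R, E R = ∑ j ∈ S, ((1/h) * (∫ x in (c j - h/2)..(c j + h/2), p R x) - φ j)^2)
    (q : Polynomial ℝ) (hq : q.degree ≤ d)
    (hφi : φi = (1/h) * ∫ x in (c i - h/2)..(c i + h/2), q.eval x)
    (hφ : ∀ j ∈ S, φ j = (1/h) * ∫ x in (c j - h/2)..(c j + h/2), q.eval x) :
    ∀ Rhat : Fin d → ℝ, (∀ R' : Fin d → ℝ, E Rhat ≤ E R') →
      (∀ x : ℝ, p Rhat x = q.eval x) ∧ E Rhat = 0 := by
  intro Rhat hmin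
  have hp_eval (R : Fin d → ℝ) (x : ℝ) : p R x = (ansatzPoly d φi (c i) X R).eval x := by
    rw [hp, eval_ansatzPoly]
  have hqd : q.natDegree ≤ d := natDegree_le_of_degree_le hq
  obtain ⟨Rstar, hRstar⟩ := exists_eval_ansatzPoly_eq hqd hh.ne' (c i)
  rw [← hφi, ← funext hX] at hRstar
  simp only [← hp_eval] at hRstar
  have hE0 : E Rhat = 0 := by
    refine le_antisymm ((hmin Rstar).trans_eq ?_) (by rw [hE]; positivity)
    rw [hE]
    refine Finset.sum_eq_zero fun j hj => ?_
    simp [hRstar, hφ j hj]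
  have hres (j : ℤ) (hj : j ∈ S) :
      ∫ x in (c j - h/2)..(c j + h/2), (ansatzPoly d φi (c i) X Rhat - q).eval x = 0 := by
    have hj' := (Finset.sum_eq_zero_iff_of_nonneg fun j _ => sq_nonneg _).mp
      ((hE Rhat).symm.trans hE0) j hj
    rw [sq_eq_zero_iff, sub_eq_zero, hφ j hj, mul_right_inj' (one_div_ne_zero hh.ne')] at hj'
    simp only [eval_sub, hp_eval] at hj' ⊢
    rw [integral_sub ((Polynomial.continuous _).intervalIntegrable _ _)
      ((Polynomial.continuous _).intervalIntegrable _ _), hj', sub_self]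
  have hdiff := eq_zero_of_intervalIntegral_eq_zero S _ _ (fun j _ => by linarith)
    ((pairwise_disjoint_Ioo_of_uniform_mesh hh hc).set_pairwise _) _
    ((natDegree_sub_le _ _).trans_lt (max_lt ((natDegree_ansatzPoly_le ..).trans_lt hcard)
      (hqd.trans_lt hcard))) hres
  exact ⟨fun x => by rw [hp_eval, ← sub_eq_zero, ← eval_sub, hdiff, eval_zero], hE0⟩

/-- Exactness of the least-squares reconstruction on polynomials of degree at
most `d`: if the data `φi`, `(φ j)_{j ∈ S}` are the cell averages of a
polynomial `q` of degree at most `d`, then any minimizer `R̂` of the quadratic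
functional `E` satisfies `p_{R̂} = q` and `E R̂ = 0`. -/
theorem least_squares_reproduces_polynomials
    (d : ℕ) (h : ℝ) (hh : 0 < h) (c : ℤ → ℝ) (hc : ∀ j : ℤ, c j = c 0 + j * h)
    (i : ℤ) (S : Finset ℤ) (hiS : i ∉ S) (hcard : d < S.card)
    (φi : ℝ) (φ : ℤ → ℝ) (X : ℕ → ℝ)
    (hX : ∀ k, X k = (1/h) * ∫ x in (c i - h/2)..(c i + h/2), (x - c i)^k)
    (p : (Fin d → ℝ) → ℝ → ℝ)
    (hp : ∀ R x, p R x = φi + ∑ k : Fin d, R k * ((x - c i)^(k.1+1) - X (k.1+1)))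
    (E : (Fin d → ℝ) → ℝ)
    (hE : ∀ R, E R = ∑ j ∈ S, ((1/h) * (∫ x in (c j - h/2)..(c j + h/2), p R x) - φ j)^2)
    (q : Polynomial ℝ) (hq : q.degree ≤ d)
    (hφi : φi = (1/h) * ∫ x in (c i - h/2)..(c i + h/2), q.eval x)
    (hφ : ∀ j ∈ S, φ j = (1/h) * ∫ x in (c j - h/2)..(c j + h/2), q.eval x) :
    ∀ Rhat : Fin d → ℝ, (∀ R' : Fin d → ℝ, E Rhat ≤ E R') →
      (∀ x : ℝ, p Rhat x = q.eval x) ∧ E Rhat = 0 :=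
  least_squares_reproduces_polynomials_general d h hh c hc i S hcard φi φ X hX p hp E hE q hq hφi hφ
end

section
/- Fix $x^*\in(0,\pi)$ and define $\phi(x)=\sin x$ for $x\in[0,x^*)$ and $\phi(x)=-\sin x$ for $x\in[x^*,\pi]$. Then the flux $x\mapsto \phi(x)^2/2$ equals $\sin^2(x)/2$ on all of $[0,\pi]$, is continuously differentiable there with derivative $\sin x\cos x$, so that for every smooth compactly supported test function $\psi$ on $(0,\pi)$ one has $\int_0^\pi \tfrac{\phi(x)^2}{2}\,\psi'(x)\,dx + \int_0^\pi \sin x\cos x\,\psi(x)\,dx = 0$; moreover $\phi(0)=\phi(\pi)=0$ and the jump at the shock satisfies the entropy condition $\lim_{x\uparrow x^*}\phi(x)=\sin x^* > -\sin x^* = \phi(x^*)$, i.e., the left state strictly exceeds the right state. -/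
open Real

lemma phi_sq (xs : ℝ) (φ : ℝ → ℝ)
    (hφ : ∀ x, φ x = if x < xs then Real.sin x else -Real.sin x) :
    ∀ x, φ x ^ 2 = Real.sin x ^ 2 := by
  intro x
  rw [hφ x]
  split <;> ring

/-- The piecewise steady Bürgers profile `φ = sin` on `[0,x*)`, `φ = -sin` on
`[x*,π]`: its flux `φ²/2` equals `sin²/2` on `[0,π]`, is continuously
differentiable there with derivative `sin·cos`, hence `φ` is a weak solution of
`(φ²/2)' = sin·cos`; moreover `φ(0) = φ(π) = 0` and the shock is entropic
(left trace `sin x*` strictly exceeds right trace `-sin x*`). -/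
theorem burgers_steady_weak_solution (xs : ℝ) (hxs : xs ∈ Set.Ioo 0 π) (φ : ℝ → ℝ)
    (hφ : ∀ x, φ x = if x < xs then Real.sin x else -Real.sin x) :
    (∀ x ∈ Set.Icc (0:ℝ) π, φ x ^ 2 / 2 = Real.sin x ^ 2 / 2) ∧
    (∀ x ∈ Set.Icc (0:ℝ) π, HasDerivAt (fun y => φ y ^ 2 / 2) (Real.sin x * Real.cos x) x) ∧
    ContinuousOn (fun x => Real.sin x * Real.cos x) (Set.Icc (0:ℝ) π) ∧
    (∀ ψ : ℝ → ℝ, ContDiff ℝ (⊤ : ℕ∞) ψ → HasCompactSupport ψ → tsupport ψ ⊆ Set.Ioo 0 π →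
      (∫ x in (0:ℝ)..π, φ x ^ 2 / 2 * deriv ψ x) +
        (∫ x in (0:ℝ)..π, Real.sin x * Real.cos x * ψ x) = 0) ∧
    φ 0 = 0 ∧ φ π = 0 ∧
    Filter.Tendsto φ (nhdsWithin xs (Set.Iio xs)) (nhds (Real.sin xs)) ∧
    Real.sin xs > -Real.sin xs ∧ φ xs = -Real.sin xs := by
  obtain ⟨hxs0, hxsπ⟩ := hxs
  have hsq := phi_sq xs φ hφ
  have hfun : (fun y => φ y ^ 2 / 2) = fun y => Real.sin y ^ 2 / 2 := by
    funext y; rw [hsq y]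
  have hderiv : ∀ x : ℝ, HasDerivAt (fun y => φ y ^ 2 / 2) (Real.sin x * Real.cos x) x := by
    intro x
    rw [hfun]
    have h : HasDerivAt (fun y => Real.sin y ^ 2 / 2)
        (2 * Real.sin x ^ 1 * Real.cos x / 2) x := by
      exact (((Real.hasDerivAt_sin x).pow 2).div_const 2)
    simpa using h.congr_deriv (by ring)
  have hsinpos : 0 < Real.sin xs := Real.sin_pos_of_pos_of_lt_pi hxs0 hxsπ
  refine ⟨fun x _ => by rw [hsq x], fun x _ => hderiv x,
    ((Real.continuous_sin.mul Real.continuous_cos).continuousOn), ?_, ?_, ?_, ?_, ?_, ?_⟩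
  · intro ψ hψ hψc hψs
    have hψ0 : ψ 0 = 0 := by
      apply image_eq_zero_of_notMem_tsupport
      intro h
      exact absurd (hψs h).1 (lt_irrefl 0)
    have hψπ : ψ π = 0 := by
      apply image_eq_zero_of_notMem_tsupport
      intro h
      exact absurd (hψs h).2 (lt_irrefl π)
    have hψd : ∀ x : ℝ, HasDerivAt ψ (deriv ψ x) x :=
      fun x => (hψ.differentiable (by simp)).differentiableAt.hasDerivAt
    have hint1 : IntervalIntegrable (fun x => Real.sin x * Real.cos x) MeasureTheory.volume 0 π :=
      (Real.continuous_sin.mul Real.continuous_cos).intervalIntegrable _ _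
    have hint2 : IntervalIntegrable (deriv ψ) MeasureTheory.volume 0 π :=
      ((hψ.continuous_deriv (by simp))).intervalIntegrable _ _
    have := intervalIntegral.integral_mul_deriv_eq_deriv_mul
      (u := fun y => φ y ^ 2 / 2) (u' := fun x => Real.sin x * Real.cos x)
      (v := ψ) (v' := deriv ψ)
      (fun x _ => hderiv x) (fun x _ => hψd x) hint1 hint2
    rw [this]
    simp [hψ0, hψπ]
  · rw [hφ 0, if_pos hxs0, Real.sin_zero]
  · rw [hφ π, if_neg (not_lt.2 hxsπ.le), Real.sin_pi, neg_zero]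
  · have h1 : Filter.Tendsto Real.sin (nhdsWithin xs (Set.Iio xs)) (nhds (Real.sin xs)) :=
      Real.continuous_sin.continuousWithinAt
    apply h1.congr'
    filter_upwards [self_mem_nhdsWithin] with x hx
    rw [hφ x, if_pos (show x < xs from hx)]
  · linarith
  · rw [hφ xs, if_neg (lt_irrefl xs)]
end
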